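/- Fix n ≥ 1 and a matrix s ∈ M_n(ℂ). Let P_s := { g ∈ GL(n,ℂ) : t ↦ exp(t s)·g·exp(−t s) is bounded on [0,∞) } and R_s := { g ∈ GL(n,ℂ) : exp(t s)·g·exp(−t s) → 1 as t → ∞ }. Then R_s is a normal subgroup of P_s: R_s is contained in P_s, R_s is a subgroup, and for every g ∈ P_s and r ∈ R_s one has g·r·g^{-1} ∈ R_s. -/

import Mathlib

/-!
Write `c_t(g) = exp (t • s) * g * exp (-(t • s))`; each `c_t` is a group homomorphism of
`GL(n,ℂ)`. Hence `R_s` is closed under products, and under inverses because `Ring.inverse` is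
continuous at `1`. For `g ∈ P_s` and `r ∈ R_s`,
`c_t(g r g⁻¹) - 1 = c_t(g) (c_t(r) - 1) c_t(g)⁻¹`, where the middle factor tends to `0`. The
outer factors stay bounded: `c_t(g)⁻¹` is the adjugate of the bounded matrix `c_t(g)` divided by
the constant determinant `det g`. Finally `R_s ⊆ P_s`, since a continuous function with a limit
at infinity is bounded on `[0, ∞)`.
-/

open NormedSpace Filter Matrix Bornology Set
open scoped Topology

section Contracting

variable {ι G A : Type*} [Group G] [NormedRing A] [HasSummableGeomSeries A]

def contractingSubgroup (c : ι → G →* Aˣ) (l : Filter ι) : Subgroup G where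
  carrier := {g | Tendsto (fun t => (c t g : A)) l (𝓝 1)}
  one_mem' := by simpa using tendsto_const_nhds
  mul_mem' {g h} hg hh := by simpa using hg.mul hh
  inv_mem' {g} hg := by
    have hinv : Tendsto Ring.inverse (𝓝 (1 : A)) (𝓝 1) := by
      simpa using (NormedRing.inverse_continuousAt (1 : Aˣ)).tendsto
    have hval : ∀ t, (c t g⁻¹ : A) = Ring.inverse (c t g : A) := fun t => by
      rw [map_inv, Ring.inverse_unit]
    show Tendsto _ l _
    simp only [hval]
    exact hinv.comp hg

variable {c : ι → G →* Aˣ} {l : Filter ι}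

theorem mem_contractingSubgroup {g : G} :
    g ∈ contractingSubgroup c l ↔ Tendsto (fun t => (c t g : A)) l (𝓝 1) :=
  Iff.rfl

theorem conj_mem_contractingSubgroup {g r : G}
    (hg : IsBoundedUnder (· ≤ ·) l fun t => ‖(c t g : A)‖)
    (hg_inv : IsBoundedUnder (· ≤ ·) l fun t => ‖(c t g⁻¹ : A)‖)
    (hr : r ∈ contractingSubgroup c l) : g * r * g⁻¹ ∈ contractingSubgroup c l := by
  have hconj : ∀ t, (c t (g * r * g⁻¹) : A) - 1 =
      (c t g : A) * ((c t r : A) - 1) * (c t g⁻¹ : A) := fun t => by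
    have hcancel : (c t g : A) * (c t g⁻¹ : A) = 1 := by simp [← Units.val_mul]
    simp only [map_mul, Units.val_mul, mul_sub, sub_mul, mul_one, hcancel]
  rw [mem_contractingSubgroup, ← tendsto_sub_nhds_zero_iff] at hr ⊢
  simp only [hconj]
  exact (isBoundedUnder_le_mul_tendsto_zero hg hr).zero_mul_isBoundedUnder_le hg_inv

end Contracting

theorem isBounded_image_Ici_of_tendsto {α : Type*} [PseudoMetricSpace α] {f : ℝ → α} {a : α}
    (hf : Continuous f) (hlim : Tendsto f atTop (𝓝 a)) (c : ℝ) : IsBounded (f '' Ici c) := by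
  obtain ⟨s, hs, hbdd⟩ := Metric.exists_isBounded_image_of_tendsto hlim
  obtain ⟨T, hT⟩ := mem_atTop_sets.mp hs
  have hcover : Ici c ⊆ Icc c T ∪ s := fun t ht =>
    (le_total t T).elim (fun h => .inl ⟨ht, h⟩) (fun h => .inr (hT t h))
  refine (((isCompact_Icc (a := c) (b := T)).image hf).isBounded.union hbdd).subset ?_
  rw [← image_union]
  exact image_mono hcover

theorem Filter.IsBoundedUnder.norm_comp_continuous {ι E F : Type*} {l : Filter ι}
    [SeminormedAddCommGroup E] [ProperSpace E] [SeminormedAddCommGroup F]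
    {φ : E → F} (hφ : Continuous φ) {f : ι → E} (hf : IsBoundedUnder (· ≤ ·) l fun t => ‖f t‖) :
    IsBoundedUnder (· ≤ ·) l fun t => ‖φ (f t)‖ := by
  obtain ⟨C, hC⟩ := hf
  rw [eventually_map] at hC
  obtain ⟨D, hD⟩ := (isCompact_closedBall (0 : E) C).exists_bound_of_continuousOn hφ.continuousOn
  exact isBoundedUnder_of_eventually_le
    (hC.mono fun t ht => hD (f t) (mem_closedBall_zero_iff.mpr ht))

namespace Matrix

section LinftyOp

open scoped Matrix.Norms.Operator

section Entries

variable {m n α : Type*} [Fintype m] [Fintype n] [SeminormedAddCommGroup α]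

theorem norm_entry_le_linfty_opNorm (A : Matrix m n α) (i : m) (j : n) : ‖A i j‖ ≤ ‖A‖ := by
  rw [linfty_opNorm_def]
  calc ‖A i j‖ ≤ ∑ j', ‖A i j'‖ :=
        Finset.single_le_sum (fun _ _ => norm_nonneg _) (Finset.mem_univ j)
    _ = ((∑ j', ‖A i j'‖₊ : NNReal) : ℝ) := by push_cast; rfl
    _ ≤ _ := NNReal.coe_le_coe.2 (Finset.le_sup (f := fun i => ∑ j, ‖A i j‖₊) (Finset.mem_univ i))

theorem linfty_opNorm_le_card_mul {A : Matrix m n α} {C : ℝ} (hC : 0 ≤ C)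
    (h : ∀ i j, ‖A i j‖ ≤ C) : ‖A‖ ≤ Fintype.card n * C := by
  have hrow : ∀ i, ∑ j, ‖A i j‖₊ ≤ Fintype.card n * C.toNNReal := fun i => by
    refine (Finset.sum_le_card_nsmul _ _ C.toNNReal fun j _ => ?_).trans_eq
      (by rw [Finset.card_univ, nsmul_eq_mul])
    exact (Real.le_toNNReal_iff_coe_le hC).mpr (h i j)
  rw [linfty_opNorm_def, ← Real.coe_toNNReal C hC, ← NNReal.coe_natCast, ← NNReal.coe_mul]
  exact NNReal.coe_le_coe.mpr (Finset.sup_le fun i _ => hrow i)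

theorem isBoundedUnder_norm_of_forall_entry_le {f : ℝ → Matrix m n α} {M : ℝ}
    (h : ∀ t, 0 ≤ t → ∀ i j, ‖f t i j‖ ≤ M) : IsBoundedUnder (· ≤ ·) atTop fun t => ‖f t‖ :=
  ⟨Fintype.card n * max M 0, eventually_atTop.mpr ⟨0, fun t ht =>
    linfty_opNorm_le_card_mul (le_max_right M 0) fun i j => (h t ht i j).trans (le_max_left M 0)⟩⟩

theorem exists_forall_entry_le_of_tendsto {f : ℝ → Matrix m n α} {a : Matrix m n α}
    (hf : Continuous f) (hlim : Tendsto f atTop (𝓝 a)) :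
    ∃ M : ℝ, ∀ t, 0 ≤ t → ∀ i j, ‖f t i j‖ ≤ M := by
  obtain ⟨M, hM⟩ := isBounded_iff_forall_norm_le.mp (isBounded_image_Ici_of_tendsto hf hlim 0)
  exact ⟨M, fun t ht i j =>
    (norm_entry_le_linfty_opNorm _ i j).trans (hM _ (mem_image_of_mem f (mem_Ici.mpr ht)))⟩

end Entries

theorem isBoundedUnder_norm_inv_of_det_eq {ι n 𝕜 : Type*} [Fintype n] [DecidableEq n] [RCLike 𝕜]
    {l : Filter ι} {f : ι → Matrix n n 𝕜} {d : 𝕜} (hdet : ∀ t, (f t).det = d)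
    (hf : IsBoundedUnder (· ≤ ·) l fun t => ‖f t‖) :
    IsBoundedUnder (· ≤ ·) l fun t => ‖(f t)⁻¹‖ := by
  obtain ⟨C, hC⟩ := hf.norm_comp_continuous continuous_id.matrix_adjugate
  rw [eventually_map] at hC
  refine isBoundedUnder_of_eventually_le (a := ‖d⁻¹‖ * C) (hC.mono fun t ht => ?_)
  rw [inv_def, hdet, Ring.inverse_eq_inv']
  exact (norm_smul_le _ _).trans (by gcongr; exact ht)

end LinftyOp

variable {n : Type*} [Fintype n] [DecidableEq n]

noncomputable def expUnit (x : Matrix n n ℂ) : GL n ℂ where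
  val := exp x
  inv := exp (-x)
  val_inv := by
    rw [← exp_add_of_commute x (-x) ((Commute.refl x).neg_right), add_neg_cancel, exp_zero]
  inv_val := by
    rw [← exp_add_of_commute (-x) x ((Commute.refl x).neg_left), neg_add_cancel, exp_zero]

noncomputable def expConj (s : Matrix n n ℂ) (t : ℝ) : GL n ℂ →* GL n ℂ :=
  (MulAut.conj (expUnit ((t : ℂ) • s))).toMonoidHom

variable (s : Matrix n n ℂ)

theorem coe_expConj (t : ℝ) (g : GL n ℂ) :
    (expConj s t g : Matrix n n ℂ) = exp ((t : ℂ) • s) * g * exp (-((t : ℂ) • s)) :=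
  rfl

theorem det_expConj (t : ℝ) (g : GL n ℂ) :
    (expConj s t g : Matrix n n ℂ).det = (g : Matrix n n ℂ).det :=
  det_units_conj _ _

section Asymptotics

open scoped Matrix.Norms.Operator

theorem continuous_expConj (g : GL n ℂ) :
    Continuous fun t : ℝ => (expConj s t g : Matrix n n ℂ) := by
  have hexp : Continuous fun z : ℂ => exp (z • s) := (differentiable_exp_smul_const ℂ s).continuous
  simp only [coe_expConj, ← neg_smul]
  exact ((hexp.comp Complex.continuous_ofReal).mul continuous_const).mul
    (hexp.comp Complex.continuous_ofReal.neg)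

theorem isBoundedUnder_norm_expConj_inv {l : Filter ℝ} {g : GL n ℂ}
    (hg : IsBoundedUnder (· ≤ ·) l fun t => ‖(expConj s t g : Matrix n n ℂ)‖) :
    IsBoundedUnder (· ≤ ·) l fun t => ‖(expConj s t g⁻¹ : Matrix n n ℂ)‖ := by
  simp only [map_inv, coe_units_inv]
  exact isBoundedUnder_norm_inv_of_det_eq (det_expConj s · g) hg

/-- The radical `R_s`. -/
noncomputable def expRadical : Subgroup (GL n ℂ) :=
  contractingSubgroup (A := Matrix n n ℂ) (expConj s) atTop

theorem exists_forall_entry_le_of_mem_expRadical {g : GL n ℂ} (hg : g ∈ expRadical s) :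
    ∃ M : ℝ, ∀ t, 0 ≤ t → ∀ i j, ‖(expConj s t g : Matrix n n ℂ) i j‖ ≤ M :=
  exists_forall_entry_le_of_tendsto (continuous_expConj s g) hg

theorem conj_mem_expRadical {g r : GL n ℂ} {M : ℝ}
    (hg : ∀ t, 0 ≤ t → ∀ i j, ‖(expConj s t g : Matrix n n ℂ) i j‖ ≤ M)
    (hr : r ∈ expRadical s) : g * r * g⁻¹ ∈ expRadical s := by
  have hg_bdd := isBoundedUnder_norm_of_forall_entry_le hg
  exact conj_mem_contractingSubgroup hg_bdd (isBoundedUnder_norm_expConj_inv s hg_bdd) hr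

end Asymptotics

end Matrix

theorem radical_normal_in_parabolic_general (n : ℕ)
    (s : Matrix (Fin n) (Fin n) ℂ) :
    let P : Set (Matrix.GeneralLinearGroup (Fin n) ℂ) :=
      { g | ∃ M : ℝ, ∀ t : ℝ, 0 ≤ t → ∀ i j : Fin n,
        ‖(exp ((t : ℂ) • s) * (g : Matrix (Fin n) (Fin n) ℂ) *
          exp (-((t : ℂ) • s))) i j‖ ≤ M }
    let R : Set (Matrix.GeneralLinearGroup (Fin n) ℂ) :=
      { g | Tendsto (fun t : ℝ => exp ((t : ℂ) • s) *
          (g : Matrix (Fin n) (Fin n) ℂ) * exp (-((t : ℂ) • s)))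
        atTop (nhds (1 : Matrix (Fin n) (Fin n) ℂ)) }
    R ⊆ P ∧
    ((1 : Matrix.GeneralLinearGroup (Fin n) ℂ) ∈ R ∧
      (∀ g h : Matrix.GeneralLinearGroup (Fin n) ℂ, g ∈ R → h ∈ R → g * h ∈ R) ∧
      (∀ g : Matrix.GeneralLinearGroup (Fin n) ℂ, g ∈ R → g⁻¹ ∈ R)) ∧
    (∀ g : Matrix.GeneralLinearGroup (Fin n) ℂ, g ∈ P →
      ∀ r : Matrix.GeneralLinearGroup (Fin n) ℂ, r ∈ R → g * r * g⁻¹ ∈ R) := by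
  intro P R
  exact ⟨fun g => Matrix.exists_forall_entry_le_of_mem_expRadical s,
    ⟨(Matrix.expRadical s).one_mem, fun _ _ => (Matrix.expRadical s).mul_mem,
      fun _ => (Matrix.expRadical s).inv_mem⟩,
    fun g ⟨M, hM⟩ r => Matrix.conj_mem_expRadical s hM⟩

/-- For `s ∈ M_n(ℂ)`, let
`P_s = { g ∈ GL(n,ℂ) : t ↦ exp(ts)·g·exp(-ts) is bounded on [0,∞) }` and
`R_s = { g ∈ GL(n,ℂ) : exp(ts)·g·exp(-ts) → 1 as t → ∞ }`. Then `R_s` is a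
normal subgroup of `P_s`: `R_s ⊆ P_s`, `R_s` is a subgroup, and `P_s` normalizes
`R_s`. -/
theorem radical_normal_in_parabolic (n : ℕ) (hn : 1 ≤ n)
    (s : Matrix (Fin n) (Fin n) ℂ) :
    let P : Set (Matrix.GeneralLinearGroup (Fin n) ℂ) :=
      { g | ∃ M : ℝ, ∀ t : ℝ, 0 ≤ t → ∀ i j : Fin n,
        ‖(exp ((t : ℂ) • s) * (g : Matrix (Fin n) (Fin n) ℂ) *
          exp (-((t : ℂ) • s))) i j‖ ≤ M }
    let R : Set (Matrix.GeneralLinearGroup (Fin n) ℂ) :=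
      { g | Tendsto (fun t : ℝ => exp ((t : ℂ) • s) *
          (g : Matrix (Fin n) (Fin n) ℂ) * exp (-((t : ℂ) • s)))
        atTop (nhds (1 : Matrix (Fin n) (Fin n) ℂ)) }
    R ⊆ P ∧
    ((1 : Matrix.GeneralLinearGroup (Fin n) ℂ) ∈ R ∧
      (∀ g h : Matrix.GeneralLinearGroup (Fin n) ℂ, g ∈ R → h ∈ R → g * h ∈ R) ∧
      (∀ g : Matrix.GeneralLinearGroup (Fin n) ℂ, g ∈ R → g⁻¹ ∈ R)) ∧
    (∀ g : Matrix.GeneralLinearGroup (Fin n) ℂ, g ∈ P →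
      ∀ r : Matrix.GeneralLinearGroup (Fin n) ℂ, r ∈ R → g * r * g⁻¹ ∈ R) :=
  radical_normal_in_parabolic_general n s
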